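/- Let G be a (τ+1)-claw-free graph with vertex weights w : V → ℝ≥0, meaning that for every vertex v, every set of pairwise non-adjacent neighbors of v has size at most τ. Then the greedy algorithm that considers vertices in decreasing order of weight and adds a vertex to the solution whenever it is non-adjacent to all previously added vertices returns an independent set I_ALG with w(I_ALG) ≥ (1/τ) · w(I_OPT), where I_OPT is a maximum weight independent set of G. -/

import Mathlib

/-- Greedy independent set: process the list in order, adding a vertex whenever it is
non-adjacent to all previously added vertices. -/
noncomputable def greedySelect {V : Type*} [DecidableEq V] (adj : V → V → Prop) :
    List V → Finset V → Finset V
  | [], acc => acc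
  | v :: rest, acc =>
    haveI := Classical.propDecidable (∀ u ∈ acc, ¬ adj v u)
    if ∀ u ∈ acc, ¬ adj v u then greedySelect adj rest (insert v acc)
    else greedySelect adj rest acc

/-!
Charge every vertex `v` of `I` to a selected vertex `g` that is `v` itself or a neighbour of `v`
with `w v ≤ w g`: one exists since `v` was either selected or blocked by an earlier, hence heavier,
selected vertex. The vertices charged to `g` form an independent set in the closed neighbourhood
of `g`: it is `{g}` or consists of pairwise non-adjacent neighbours of `g`, so by claw-freeness at
most `τ` vertices are charged to each selected vertex.
-/

open Finset

theorem greedySelect_subset {V : Type*} [DecidableEq V] (adj : V → V → Prop)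
    (l : List V) (acc : Finset V) : acc ⊆ greedySelect adj l acc := by
  induction l generalizing acc with
  | nil => rw [greedySelect]
  | cons a rest ih =>
    rw [greedySelect]
    split
    · exact (subset_insert a acc).trans (ih _)
    · exact ih acc

theorem greedySelect_dominates {V : Type*} [DecidableEq V] (adj : V → V → Prop) (w : V → ℝ)
    {l : List V} (hl : l.Pairwise fun x y => w y ≤ w x) {acc : Finset V}
    (hacc : ∀ u ∈ acc, ∀ v ∈ l, w v ≤ w u) {v : V} (hv : v ∈ l) :
    ∃ g ∈ greedySelect adj l acc, (v = g ∨ adj v g) ∧ w v ≤ w g := by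
  induction l generalizing acc with
  | nil => simp at hv
  | cons a rest ih =>
    obtain ⟨ha_max, hrest⟩ := List.pairwise_cons.1 hl
    have hacc_rest : ∀ u ∈ acc, ∀ x ∈ rest, w x ≤ w u :=
      fun u hu x hx => hacc u hu x (List.mem_cons_of_mem a hx)
    rw [greedySelect]
    split
    · rcases List.mem_cons.1 hv with rfl | hv
      · exact ⟨v, greedySelect_subset adj rest _ (mem_insert_self v acc),
          Or.inl rfl, le_rfl⟩
      · refine ih hrest ?_ hv
        intro u hu x hx
        rcases mem_insert.1 hu with rfl | hu
        exacts [ha_max x hx, hacc_rest u hu x hx]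
    · rename_i hblocked
      push Not at hblocked
      rcases List.mem_cons.1 hv with rfl | hv
      · obtain ⟨u, hu, hvu⟩ := hblocked
        exact ⟨u, greedySelect_subset adj rest acc hu, Or.inr hvu,
          hacc u hu v List.mem_cons_self⟩
      · exact ih hrest hacc_rest hv

theorem sum_le_nsmul_sum_of_card_fiber_le {α β M : Type*} [DecidableEq β]
    [AddCommMonoid M] [PartialOrder M] [IsOrderedAddMonoid M]
    {I : Finset α} {A : Finset β} {f : α → β} {u : α → M} {c : β → M} {k : ℕ}
    (hf : ∀ v ∈ I, f v ∈ A) (hle : ∀ v ∈ I, u v ≤ c (f v)) (hc : ∀ g ∈ A, 0 ≤ c g)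
    (hfiber : ∀ g ∈ A, #{v ∈ I | f v = g} ≤ k) :
    ∑ v ∈ I, u v ≤ k • ∑ g ∈ A, c g := by
  rw [← sum_fiberwise_of_maps_to hf, smul_sum]
  refine sum_le_sum fun g hg => ?_
  calc ∑ v ∈ I with f v = g, u v
      ≤ #{v ∈ I | f v = g} • c g :=
        sum_le_card_nsmul _ _ _ fun v hv => by
          obtain ⟨hvI, rfl⟩ := mem_filter.1 hv
          exact hle v hvI
    _ ≤ k • c g := nsmul_le_nsmul_left (hc g hg) (hfiber g hg)

theorem card_le_of_isIndep_of_forall_eq_or_adj {V : Type*} {G : SimpleGraph V} {τ : ℕ}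
    (hτ : 1 ≤ τ)
    (hclaw : ∀ v : V, ∀ S : Finset V,
      (∀ u ∈ S, G.Adj v u) → (∀ u ∈ S, ∀ u' ∈ S, u ≠ u' → ¬ G.Adj u u') → S.card ≤ τ)
    {g : V} {S : Finset V} (hS : ∀ u ∈ S, u = g ∨ G.Adj u g)
    (hindep : ∀ u ∈ S, ∀ u' ∈ S, ¬ G.Adj u u') : S.card ≤ τ := by
  by_cases hg : g ∈ S
  · have : S ⊆ {g} := fun u hu => by
      rcases hS u hu with rfl | hug
      · exact mem_singleton_self u
      · exact absurd hug (hindep u hu g hg)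
    exact (card_le_card this).trans (card_singleton g ▸ hτ)
  · refine hclaw g S (fun u hu => ?_) fun u hu u' hu' _ => hindep u hu u' hu'
    rcases hS u hu with rfl | hug
    exacts [absurd hu hg, hug.symm]

theorem greedy_claw_free_approximation {V : Type*} [DecidableEq V]
    (G : SimpleGraph V) (w : V → ℝ) (hw : ∀ v, 0 ≤ w v)
    (τ : ℕ) (hτ : 1 ≤ τ)
    (hclaw : ∀ v : V, ∀ S : Finset V,
      (∀ u ∈ S, G.Adj v u) →
      (∀ u ∈ S, ∀ u' ∈ S, u ≠ u' → ¬ G.Adj u u') →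
      S.card ≤ τ)
    (l : List V) (hsort : l.Pairwise fun x y => w y ≤ w x)
    (hall : ∀ v : V, v ∈ l)
    (I : Finset V) (hI : ∀ u ∈ I, ∀ v ∈ I, ¬ G.Adj u v) :
    (1 / (τ : ℝ)) * ∑ v ∈ I, w v ≤ ∑ v ∈ greedySelect G.Adj l ∅, w v := by
  choose f hf hf_adj hf_le using fun v =>
    greedySelect_dominates G.Adj w hsort (acc := ∅) (by simp) (hall v)
  have hfiber (g : V) : #{v ∈ I | f v = g} ≤ τ := by
    refine card_le_of_isIndep_of_forall_eq_or_adj hτ hclaw (g := g) (fun u hu => ?_)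
      fun u hu u' hu' => hI u (mem_filter.1 hu).1 u' (mem_filter.1 hu').1
    obtain ⟨-, rfl⟩ := mem_filter.1 hu
    exact hf_adj u
  have hcharge := sum_le_nsmul_sum_of_card_fiber_le (fun v _ => hf v)
    (fun v _ => hf_le v) (fun g _ => hw g) (fun g _ => hfiber g)
  rw [nsmul_eq_mul] at hcharge
  rw [one_div, inv_mul_le_iff₀ (by exact_mod_cast hτ)]
  exact hcharge
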